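/- If A ⊆ 𝕃 ∖ {c} and f : 𝕃 → 𝕃 behaves as rer_c on A, then f preserves the relation Q on A ∪ {c}. -/

import Mathlib

/-- The cone `S^c_a` of `a` at `c`: the class of `a` under E_c(x,y) ⟺ xy|c.
`Cr z x y` denotes C(z;x,y), i.e. xy|z. -/
def cone {L : Type*} (Cr : L → L → L → Prop) (c a : L) : Set L := {x | Cr c x a}

/-- `P|Q`: the sets `P` and `Q` split from each other: every pair from one splits off
from every point of the other. -/
def splitsSet {L : Type*} (Cr : L → L → L → Prop) (P Q : Set L) : Prop :=
  (∀ p₁ ∈ P, ∀ p₂ ∈ P, ∀ q ∈ Q, Cr q p₁ p₂) ∧ (∀ q₁ ∈ Q, ∀ q₂ ∈ Q, ∀ p ∈ P, Cr p q₁ q₂)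

/-- The derived quartet relation `ab:cd`: {a,b} splits from {c,d}, including the
degenerate cases of equalities. -/
def Qrel {L : Type*} (Cr : L → L → L → Prop) (a b c d : L) : Prop :=
  (Cr c a b ∧ Cr d a b) ∨ (Cr a c d ∧ Cr b c d) ∨
  (a = b ∧ a ≠ c ∧ a ≠ d) ∨ (c = d ∧ c ≠ a ∧ c ≠ b)

/-- `f` preserves `Q` on `X`. -/
def QPreservesOn {L : Type*} (Cr : L → L → L → Prop) (f : L → L) (X : Set L) : Prop :=
  ∀ a ∈ X, ∀ b ∈ X, ∀ u ∈ X, ∀ v ∈ X,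
    Qrel Cr a b u v → Qrel Cr (f a) (f b) (f u) (f v)

/-- Common cone conditions (1)–(3) of Definition of the behaviors at a constant `c`:
(1) f(c)|f(A∩S^c_a); (2) f preserves C on each A∩S^c_a; (3) distinct cones have
splitting images. -/
def ConeConds {L : Type*} (Cr : L → L → L → Prop) (f : L → L) (c : L) (A : Set L) : Prop :=
  (∀ a ∈ A, ∀ x ∈ A ∩ cone Cr c a, ∀ y ∈ A ∩ cone Cr c a, Cr (f c) (f x) (f y)) ∧
  (∀ a ∈ A, ∀ x ∈ A ∩ cone Cr c a, ∀ y ∈ A ∩ cone Cr c a, ∀ z ∈ A ∩ cone Cr c a,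
    Cr z x y → Cr (f z) (f x) (f y)) ∧
  (∀ a ∈ A, ∀ b ∈ A, cone Cr c a = cone Cr c b ∨
    splitsSet Cr (f '' (A ∩ cone Cr c a)) (f '' (A ∩ cone Cr c b)))

/-- `f` behaves as `cut_c` on `A`: cone conditions and, for x,y,z ∈ A with x|yzc and
y|zc: f(x)f(y)f(z)|f(c) and f(x)|f(y)f(z). -/
def CutOn {L : Type*} (Cr : L → L → L → Prop) (f : L → L) (c : L) (A : Set L) : Prop :=
  ConeConds Cr f c A ∧
  ∀ x ∈ A, ∀ y ∈ A, ∀ z ∈ A,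
    (Cr x y z ∧ Cr x y c ∧ Cr x z c ∧ Cr y z c) →
    (Cr (f c) (f x) (f y) ∧ Cr (f c) (f x) (f z) ∧ Cr (f c) (f y) (f z) ∧
      Cr (f x) (f y) (f z))

/-- `f` behaves as `rer_c` on `A`: cone conditions and, for x,y,z ∈ A with x|yzc and
y|zc: f(x)f(y)f(z)|f(c) and f(x)f(y)|f(z). -/
def RerOn {L : Type*} (Cr : L → L → L → Prop) (f : L → L) (c : L) (A : Set L) : Prop :=
  ConeConds Cr f c A ∧
  ∀ x ∈ A, ∀ y ∈ A, ∀ z ∈ A,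
    (Cr x y z ∧ Cr x y c ∧ Cr x z c ∧ Cr y z c) →
    (Cr (f c) (f x) (f y) ∧ Cr (f c) (f x) (f z) ∧ Cr (f c) (f y) (f z) ∧
      Cr (f z) (f x) (f y))

/-- `f` behaves as `tilde-rer_c` on `A`: cone conditions and, for x,y ∈ A with x|yc:
f(y)|f(x)f(c). -/
def TildeRerOn {L : Type*} (Cr : L → L → L → Prop) (f : L → L) (c : L) (A : Set L) : Prop :=
  ConeConds Cr f c A ∧ ∀ x ∈ A, ∀ y ∈ A, Cr x y c → Cr (f y) (f x) (f c)

/-- The automorphisms of (𝕃;C), as self-maps of 𝕃. -/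
def AutC {L : Type*} (Cr : L → L → L → Prop) : Set (Function.End L) :=
  {α | Function.Bijective α ∧ ∀ z x y : L, Cr z x y ↔ Cr (α z) (α x) (α y)}

/-- `A` is `c`-universal: every finite `U` with a marked point `u` can be mapped by an
automorphism of (𝕃;C) into `A ∪ {c}` with `u ↦ c`. -/
def cUniversal {L : Type*} (Cr : L → L → L → Prop) (c : L) (A : Set L) : Prop :=
  ∀ U : Finset L, ∀ u ∈ U, ∃ α ∈ AutC Cr, α u = c ∧ ∀ x ∈ U, α x ∈ A ∪ {c}

/-!
Conditions (1)–(3) make `f` injective on `A ∪ {c}`, which settles the degenerate quartets.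
For a genuine split `ab|u`, `ab|v`: if `a` and `b` lie in one cone at `c`, conditions (1)–(3)
give `f(a)f(b)|f(w)` for every such `w`. Otherwise each quartet to check has the form
`bc|u`, `bc|v` with `u, v ∈ A`, and must go to `f(u)f(v)|f(b)`, `f(u)f(v)|f(c)`: if `uv|b`,
then `u, v` share a cone that `b` avoids and conditions (1), (3) apply; otherwise, up to swapping
`u` and `v`, we have `v|ubc` and `u|bc`, which is exactly the situation of condition (4).
-/

section CRelation

variable {L : Type*} {Cr : L → L → L → Prop}

theorem ne_of_cr_left (hC2 : ∀ z x y : L, Cr z x y → ¬ Cr y x z)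
    (hC4 : ∀ z x : L, x ≠ z → Cr z x x) {z x y : L} (h : Cr z x y) : z ≠ x := by
  rintro rfl
  by_cases hy : y = z
  · subst hy
    exact hC2 _ _ _ h h
  · exact hC2 _ _ _ h (hC4 y z (Ne.symm hy))

theorem ne_of_cr_right (hsym : ∀ z x y : L, Cr z x y → Cr z y x)
    (hC2 : ∀ z x y : L, Cr z x y → ¬ Cr y x z) (hC4 : ∀ z x : L, x ≠ z → Cr z x x)
    {z x y : L} (h : Cr z x y) : z ≠ y :=
  ne_of_cr_left hC2 hC4 (hsym _ _ _ h)

theorem Qrel.swap {a b u v : L} (h : Qrel Cr a b u v) : Qrel Cr u v a b := by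
  unfold Qrel at h ⊢
  tauto

end CRelation

namespace ConeConds

variable {L : Type*} {Cr : L → L → L → Prop} {f : L → L} {c : L} {A : Set L}

theorem cr_center (hf : ConeConds Cr f c A) (hC4 : ∀ z x : L, x ≠ z → Cr z x x)
    (hA : A ⊆ {x : L | x ≠ c}) {x y : L} (hx : x ∈ A) (hy : y ∈ A) (h : Cr c x y) :
    Cr (f c) (f x) (f y) :=
  hf.1 y hy x ⟨hx, h⟩ y ⟨hy, hC4 c y (hA hy)⟩

theorem cr_of_mem_cone (hf : ConeConds Cr f c A) (hC4 : ∀ z x : L, x ≠ z → Cr z x x)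
    (hA : A ⊆ {x : L | x ≠ c}) {x y z : L} (hx : x ∈ A) (hy : y ∈ A) (hz : z ∈ A)
    (hxy : Cr c x y) (hzy : Cr c z y) (h : Cr z x y) : Cr (f z) (f x) (f y) :=
  hf.2.1 y hy x ⟨hx, hxy⟩ y ⟨hy, hC4 c y (hA hy)⟩ z ⟨hz, hzy⟩ h

theorem cr_of_not_mem_cone (hf : ConeConds Cr f c A) (hC4 : ∀ z x : L, x ≠ z → Cr z x x)
    (hA : A ⊆ {x : L | x ≠ c}) {x y w : L} (hx : x ∈ A) (hy : y ∈ A) (hw : w ∈ A)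
    (hyx : ¬ Cr c y x) (hwx : Cr c w x) : Cr (f y) (f x) (f w) := by
  have hxx : Cr c x x := hC4 c x (hA hx)
  have hyy : Cr c y y := hC4 c y (hA hy)
  rcases hf.2.2 x hx y hy with hcone | hsplit
  · exact absurd (show y ∈ cone Cr c x from hcone ▸ hyy) hyx
  · exact hsplit.1 _ ⟨x, ⟨hx, hxx⟩, rfl⟩ _ ⟨w, ⟨hw, hwx⟩, rfl⟩ _ ⟨y, ⟨hy, hyy⟩, rfl⟩

theorem cr_self_of_ne (hf : ConeConds Cr f c A) (hC4 : ∀ z x : L, x ≠ z → Cr z x x)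
    (hA : A ⊆ {x : L | x ≠ c}) {x y : L} (hx : x ∈ A) (hy : y ∈ A ∪ {c}) (hxy : x ≠ y) :
    Cr (f y) (f x) (f x) := by
  have hxx : Cr c x x := hC4 c x (hA hx)
  rcases hy with hy | rfl
  · by_cases hyx : Cr c y x
    · exact hf.cr_of_mem_cone hC4 hA hx hx hy hxx hyx (hC4 y x hxy)
    · exact hf.cr_of_not_mem_cone hC4 hA hx hy hx hyx hxx
  · exact hf.cr_center hC4 hA hx hx hxx

theorem injOn (hf : ConeConds Cr f c A) (hC2 : ∀ z x y : L, Cr z x y → ¬ Cr y x z)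
    (hC4 : ∀ z x : L, x ≠ z → Cr z x x) (hA : A ⊆ {x : L | x ≠ c}) :
    Set.InjOn f (A ∪ {c}) := by
  intro x hx y hy hfxy
  by_contra hxy
  rcases hx with hx | rfl
  · exact ne_of_cr_left hC2 hC4 (hf.cr_self_of_ne hC4 hA hx hy hxy) hfxy.symm
  · rcases hy with hy | rfl
    · exact ne_of_cr_left hC2 hC4 (hf.cr_self_of_ne hC4 hA hy (Or.inr rfl) (Ne.symm hxy)) hfxy
    · exact hxy rfl

theorem map_cr_of_cr_center (hf : ConeConds Cr f c A) (hsym : ∀ z x y : L, Cr z x y → Cr z y x)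
    (hC4 : ∀ z x : L, x ≠ z → Cr z x x) (hA : A ⊆ {x : L | x ≠ c}) {a b w : L}
    (ha : a ∈ A) (hb : b ∈ A) (hw : w ∈ A ∪ {c}) (hab : Cr c a b) (h : Cr w a b) :
    Cr (f w) (f a) (f b) := by
  rcases hw with hw | rfl
  · by_cases hwb : Cr c w b
    · exact hf.cr_of_mem_cone hC4 hA ha hb hw hab hwb h
    · exact hsym _ _ _ (hf.cr_of_not_mem_cone hC4 hA hb hw ha hwb hab)
  · exact hf.cr_center hC4 hA ha hb hab

end ConeConds

namespace RerOn

variable {L : Type*} {Cr : L → L → L → Prop} {f : L → L} {c : L} {A : Set L}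

theorem map_cr_of_cr_center_pair (hrer : RerOn Cr f c A)
    (hsym : ∀ z x y : L, Cr z x y → Cr z y x) (hC2 : ∀ z x y : L, Cr z x y → ¬ Cr y x z)
    (htrans : ∀ z x y w : L, Cr z x y → Cr z y w → Cr z x w)
    (hC3 : ∀ z x y w : L, Cr z x y → (Cr z w y ∨ Cr w x y))
    (hC4 : ∀ z x : L, x ≠ z → Cr z x x)
    (hC8 : ∀ u v w : L, u ≠ v → u ≠ w → v ≠ w → Cr w u v ∨ Cr v u w ∨ Cr u v w)
    (hA : A ⊆ {x : L | x ≠ c}) ⦃b u v : L⦄ (hb : b ∈ A) (hu : u ∈ A) (hv : v ∈ A)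
    (hucb : Cr u c b) (hvcb : Cr v c b) :
    Cr (f c) (f u) (f v) ∧ Cr (f b) (f u) (f v) := by
  have hbu : ¬ Cr c b u := hC2 _ _ _ (hsym _ _ _ hucb)
  have of_ordered : ∀ {u v : L}, u ∈ A → v ∈ A → Cr u c b → Cr v c b → Cr v u b →
      Cr (f c) (f u) (f v) ∧ Cr (f b) (f u) (f v) := by
    intro u v hu hv hucb hvcb hvub
    have hvbc := hsym _ _ _ hvcb
    obtain ⟨hc, -, -, hb⟩ := hrer.2 v hv u hu b hb
      ⟨hvub, htrans _ _ _ _ hvub hvbc, hvbc, hsym _ _ _ hucb⟩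
    exact ⟨hsym _ _ _ hc, hsym _ _ _ hb⟩
  by_cases huv : u = v
  · subst huv
    have huu : Cr c u u := hC4 c u (hA hu)
    exact ⟨hrer.1.cr_center hC4 hA hu hu huu, hrer.1.cr_of_not_mem_cone hC4 hA hu hb hu hbu huu⟩
  rcases hC8 u v b huv (ne_of_cr_right hsym hC2 hC4 hucb) (ne_of_cr_right hsym hC2 hC4 hvcb)
    with hbuv | hvub | huvb
  · have hcuv : Cr c u v := (hC3 b u v c hbuv).resolve_left (hC2 _ _ _ hvcb)
    exact ⟨hrer.1.cr_center hC4 hA hu hv hcuv,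
      hrer.1.cr_of_not_mem_cone hC4 hA hu hb hv hbu (hsym _ _ _ hcuv)⟩
  · exact of_ordered hu hv hucb hvcb hvub
  · obtain ⟨hc, hb⟩ := of_ordered hv hu hvcb hucb huvb
    exact ⟨hsym _ _ _ hc, hsym _ _ _ hb⟩

theorem map_qrel_of_cr (hrer : RerOn Cr f c A)
    (hsym : ∀ z x y : L, Cr z x y → Cr z y x) (hC2 : ∀ z x y : L, Cr z x y → ¬ Cr y x z)
    (htrans : ∀ z x y w : L, Cr z x y → Cr z y w → Cr z x w)
    (hC3 : ∀ z x y w : L, Cr z x y → (Cr z w y ∨ Cr w x y))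
    (hC4 : ∀ z x : L, x ≠ z → Cr z x x)
    (hC8 : ∀ u v w : L, u ≠ v → u ≠ w → v ≠ w → Cr w u v ∨ Cr v u w ∨ Cr u v w)
    (hA : A ⊆ {x : L | x ≠ c}) ⦃a b u v : L⦄ (ha : a ∈ A ∪ {c}) (hb : b ∈ A ∪ {c})
    (hu : u ∈ A ∪ {c}) (hv : v ∈ A ∪ {c}) (hua : Cr u a b) (hva : Cr v a b) :
    Qrel Cr (f a) (f b) (f u) (f v) := by
  have pair := hrer.map_cr_of_cr_center_pair hsym hC2 htrans hC3 hC4 hC8 hA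
  rcases ha with ha | ha <;> rcases hb with hb | hb
  · by_cases hab : Cr c a b
    · exact Or.inl ⟨hrer.1.map_cr_of_cr_center hsym hC4 hA ha hb hu hab hua,
        hrer.1.map_cr_of_cr_center hsym hC4 hA ha hb hv hab hva⟩
    have huA : u ∈ A := hu.resolve_right (by rintro rfl; exact hab hua)
    have hvA : v ∈ A := hv.resolve_right (by rintro rfl; exact hab hva)
    have hba : ¬ Cr c b a := fun h => hab (hsym _ _ _ h)
    have huca : Cr u c a := (hC3 u b a c (hsym _ _ _ hua)).resolve_right hba
    have hvca : Cr v c a := (hC3 v b a c (hsym _ _ _ hva)).resolve_right hba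
    have hucb : Cr u c b := (hC3 u a b c hua).resolve_right hab
    have hvcb : Cr v c b := (hC3 v a b c hva).resolve_right hab
    exact Or.inr (Or.inl ⟨(pair ha huA hvA huca hvca).2, (pair hb huA hvA hucb hvcb).2⟩)
  · obtain rfl : c = b := hb.symm
    have huA : u ∈ A := hu.resolve_right (ne_of_cr_right hsym hC2 hC4 hua)
    have hvA : v ∈ A := hv.resolve_right (ne_of_cr_right hsym hC2 hC4 hva)
    obtain ⟨hc, ha⟩ := pair ha huA hvA (hsym _ _ _ hua) (hsym _ _ _ hva)
    exact Or.inr (Or.inl ⟨ha, hc⟩)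
  · obtain rfl : c = a := ha.symm
    have huA : u ∈ A := hu.resolve_right (ne_of_cr_left hC2 hC4 hua)
    have hvA : v ∈ A := hv.resolve_right (ne_of_cr_left hC2 hC4 hva)
    exact Or.inr (Or.inl (pair hb huA hvA hua hva))
  · obtain rfl : c = a := ha.symm
    obtain rfl : c = b := hb.symm
    have huc : u ≠ c := ne_of_cr_left hC2 hC4 hua
    have hvc : v ≠ c := ne_of_cr_left hC2 hC4 hva
    have inj := hrer.1.injOn hC2 hC4 hA
    exact Or.inl ⟨hC4 _ _ (inj.ne (Or.inr rfl) hu huc.symm),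
      hC4 _ _ (inj.ne (Or.inr rfl) hv hvc.symm)⟩

end RerOn

/-- If `f` behaves as `rer_c` on `A ⊆ 𝕃 ∖ {c}`, then `f` preserves `Q` on `A ∪ {c}`. -/
theorem stmt13 {L : Type*} (Cr : L → L → L → Prop)
    (hsym : ∀ z x y : L, Cr z x y → Cr z y x)
    (hC2 : ∀ z x y : L, Cr z x y → ¬ Cr y x z)
    (htrans : ∀ z x y w : L, Cr z x y → Cr z y w → Cr z x w)
    (hC3 : ∀ z x y w : L, Cr z x y → (Cr z w y ∨ Cr w x y))
    (hC4 : ∀ z x : L, x ≠ z → Cr z x x)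
    (hC8 : ∀ u v w : L, u ≠ v → u ≠ w → v ≠ w → Cr w u v ∨ Cr v u w ∨ Cr u v w)
    (c : L) (A : Set L) (hA : A ⊆ {x : L | x ≠ c}) (f : L → L)
    (hrer : RerOn Cr f c A) :
    QPreservesOn Cr f (A ∪ {c}) := by
  have inj := hrer.1.injOn hC2 hC4 hA
  have split := hrer.map_qrel_of_cr hsym hC2 htrans hC3 hC4 hC8 hA
  intro a ha b hb u hu v hv hQ
  rcases hQ with ⟨hua, hva⟩ | ⟨hau, hbu⟩ | ⟨rfl, hau, hav⟩ | ⟨rfl, hua, hub⟩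
  · exact split ha hb hu hv hua hva
  · exact (split hu hv ha hb hau hbu).swap
  · exact Or.inr (Or.inr (Or.inl ⟨rfl, inj.ne ha hu hau, inj.ne ha hv hav⟩))
  · exact Or.inr (Or.inr (Or.inr ⟨rfl, inj.ne hu ha hua, inj.ne hu hb hub⟩))
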